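/- If S is a Gallai-Edmonds set of a finite graph G, then the set of vertices belonging to odd S-components equals D(G), the set of vertices left exposed by at least one maximum matching of G. -/
import Mathlib


open SimpleGraph Set

variable {V : Type*} [Fintype V] [DecidableEq V]

/-- The vertex set (in `V`) of a connected component of the graph induced on `B`. -/
def compSupp (G : SimpleGraph V) (B : Set V)
    (c : (G.induce B).ConnectedComponent) : Set V :=
  Subtype.val '' c.supp

/-- `A` is (the vertex set of) a connected component of `G` restricted to `B`. -/
def IsCompOf (G : SimpleGraph V) (B : Set V) (A : Set V) : Prop :=
  ∃ c : (G.induce B).ConnectedComponent, A = compSupp G B c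

/-- The number of odd connected components of `G` restricted to `B`. -/
noncomputable def oddComps (G : SimpleGraph V) (B : Set V) : ℕ :=
  Set.ncard {c : (G.induce B).ConnectedComponent | Odd (compSupp G B c).ncard}

/-- The deficiency `df(S) = od(S) - |S|`. -/
noncomputable def df (G : SimpleGraph V) (S : Set V) : ℤ :=
  (oddComps G Sᶜ : ℤ) - S.ncard

/-- The induced subgraph on `A` has a perfect matching. -/
def HasPM (G : SimpleGraph V) (A : Set V) : Prop :=
  ∃ M : Subgraph (G.induce A), M.IsPerfectMatching

/-- `Df(S)`: total number of vertices in components of `G - S` with no perfect matching. -/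
noncomputable def Df (G : SimpleGraph V) (S : Set V) : ℕ :=
  Set.ncard (⋃ c ∈ {c : (G.induce Sᶜ).ConnectedComponent |
    ¬ HasPM G (compSupp G Sᶜ c)}, compSupp G Sᶜ c)

/-- The set of `M`-exposed vertices. -/
def exposed (G : SimpleGraph V) (M : Subgraph G) : Set V :=
  {v | v ∉ M.support}

/-- `A` induces a factor-critical graph. -/
def FactorCritical (G : SimpleGraph V) (A : Set V) : Prop :=
  ∀ v ∈ A, HasPM G (A \ {v})

/-- The neighborhood of `T ⊆ S` in the bipartite minor `⟨G,S⟩`: the odd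
`S`-components adjacent to some vertex of `T`. -/
def minorNbhd (G : SimpleGraph V) (S T : Set V) :
    Set (G.induce Sᶜ).ConnectedComponent :=
  {c | Odd (compSupp G Sᶜ c).ncard ∧ ∃ u ∈ T, ∃ w ∈ compSupp G Sᶜ c, G.Adj u w}

/-- `S` is a Gallai-Edmonds set of `G`. -/
def GallaiEdmonds (G : SimpleGraph V) (S : Set V) : Prop :=
  (∀ c : (G.induce Sᶜ).ConnectedComponent,
      Even (compSupp G Sᶜ c).ncard → HasPM G (compSupp G Sᶜ c)) ∧
  (∀ c : (G.induce Sᶜ).ConnectedComponent,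
      Odd (compSupp G Sᶜ c).ncard → FactorCritical G (compSupp G Sᶜ c)) ∧
  (∀ T ⊆ S, T.Nonempty → T.ncard + 1 ≤ (minorNbhd G S T).ncard)

/-- `w` and `w'` lie in the same `S`-component. -/
def SameComp (G : SimpleGraph V) (S : Set V) (w w' : V) : Prop :=
  ∃ c : (G.induce Sᶜ).ConnectedComponent,
    w ∈ compSupp G Sᶜ c ∧ w' ∈ compSupp G Sᶜ c

/-- `M` is a maximum matching of `G`. -/
def IsMaximumMatching (G : SimpleGraph V) (M : Subgraph G) : Prop :=
  M.IsMatching ∧ ∀ M' : Subgraph G, M'.IsMatching →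
    M'.edgeSet.ncard ≤ M.edgeSet.ncard

section Helpers

set_option linter.unusedSectionVars false

variable {G : SimpleGraph V} {S : Set V}

lemma mem_compSupp {c : (G.induce Sᶜ).ConnectedComponent} {v : V} :
    v ∈ compSupp G Sᶜ c ↔ ∃ h : v ∈ Sᶜ, (G.induce Sᶜ).connectedComponentMk ⟨v, h⟩ = c := by
  constructor
  · rintro ⟨⟨w, hw⟩, hsupp, rfl⟩
    exact ⟨hw, hsupp⟩
  · rintro ⟨h, hc⟩
    exact ⟨⟨v, h⟩, hc, rfl⟩

lemma compSupp_subset (c : (G.induce Sᶜ).ConnectedComponent) : compSupp G Sᶜ c ⊆ Sᶜ := by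
  rintro v ⟨⟨w, hw⟩, _, rfl⟩; exact hw

lemma compSupp_nonempty (c : (G.induce Sᶜ).ConnectedComponent) : (compSupp G Sᶜ c).Nonempty := by
  obtain ⟨⟨v, hv⟩, hc⟩ := c.exists_rep
  exact ⟨v, mem_compSupp.2 ⟨hv, hc⟩⟩

lemma compSupp_disjoint {c c' : (G.induce Sᶜ).ConnectedComponent} (h : c ≠ c') :
    Disjoint (compSupp G Sᶜ c) (compSupp G Sᶜ c') := by
  rw [Set.disjoint_left]
  rintro v hv hv'
  obtain ⟨h1, h2⟩ := mem_compSupp.1 hv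
  obtain ⟨h1', h2'⟩ := mem_compSupp.1 hv'
  exact h (h2 ▸ h2' ▸ rfl)

lemma compSupp_eq_of_mem {c c' : (G.induce Sᶜ).ConnectedComponent} {v : V}
    (hv : v ∈ compSupp G Sᶜ c) (hv' : v ∈ compSupp G Sᶜ c') : c = c' := by
  by_contra h
  exact (compSupp_disjoint h).ne_of_mem hv hv' rfl

lemma adj_mem_compSupp {c : (G.induce Sᶜ).ConnectedComponent} {v w : V}
    (hv : v ∈ compSupp G Sᶜ c) (hw : w ∈ Sᶜ) (hadj : G.Adj v w) :
    w ∈ compSupp G Sᶜ c := by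
  obtain ⟨h1, h2⟩ := mem_compSupp.1 hv
  refine mem_compSupp.2 ⟨hw, ?_⟩
  rw [← h2]
  exact (SimpleGraph.ConnectedComponent.connectedComponentMk_eq_of_adj
    (show (G.induce Sᶜ).Adj ⟨w, hw⟩ ⟨v, h1⟩ from hadj.symm))

lemma exists_compSupp_mem {v : V} (hv : v ∈ Sᶜ) :
    ∃ c : (G.induce Sᶜ).ConnectedComponent, v ∈ compSupp G Sᶜ c :=
  ⟨_, mem_compSupp.2 ⟨hv, rfl⟩⟩

lemma matching_verts_ncard (M : Subgraph G) (hM : M.IsMatching) :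
    M.verts.ncard = 2 * M.edgeSet.ncard := by
  classical
  have h1 : M.verts.ncard = M.verts.toFinset.card := Set.ncard_eq_toFinset_card' _
  rw [Subgraph.isMatching_iff_forall_degree] at hM
  have h3 : M.verts.toFinset.card = 2 * M.coe.edgeFinset.card := by
    rw [← M.coe.sum_degrees_eq_twice_card_edges, Set.toFinset_card, ← Finset.card_univ,
      Finset.card_eq_sum_ones]
    refine Finset.sum_congr rfl fun v _ => ?_
    rw [M.coe_degree]
    convert (hM v v.2).symm using 2
  have h4 : M.coe.edgeFinset.card = M.edgeSet.ncard := by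
    rw [← M.image_coe_edgeSet_coe,
      Set.ncard_image_of_injective _ (Sym2.map.injective Subtype.val_injective),
      Set.ncard_eq_toFinset_card', Set.toFinset_card, ← edgeFinset_card]
  rw [h1, h3, h4]

lemma exposed_eq_compl_verts (M : Subgraph G) (hM : M.IsMatching) :
    exposed G M = (M.verts)ᶜ := by
  ext v; simp [exposed, hM.support_eq_verts]

lemma exposed_ncard_add (M : Subgraph G) (hM : M.IsMatching) :
    (exposed G M).ncard + 2 * M.edgeSet.ncard = Fintype.card V := by
  rw [exposed_eq_compl_verts M hM, ← matching_verts_ncard M hM]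
  have := Set.ncard_add_ncard_compl M.verts
  rw [Nat.card_eq_fintype_card] at this
  omega

lemma hasPM_subgraph {A : Set V} (h : HasPM G A) :
    ∃ M : Subgraph G, M.IsMatching ∧ M.verts = A := by
  obtain ⟨M, hM⟩ := h
  let ι : G.induce A →g G := ⟨Subtype.val, fun {a b} hab => hab⟩
  refine ⟨M.map ι, hM.1.map ι Subtype.val_injective, ?_⟩
  rw [Subgraph.map_verts, hM.2.verts_eq_univ]
  rw [Set.image_univ]; exact Subtype.range_coe (s := A)

lemma odd_comp_dichotomy (M : Subgraph G) (hM : M.IsMatching)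
    (c : (G.induce Sᶜ).ConnectedComponent) (hodd : Odd (compSupp G Sᶜ c).ncard) :
    (∃ v ∈ compSupp G Sᶜ c, v ∈ exposed G M) ∨ (∃ s ∈ S, ∃ w ∈ compSupp G Sᶜ c, M.Adj s w) := by
  classical
  by_contra hcon
  push_neg at hcon
  obtain ⟨h1, h2⟩ := hcon
  set A := compSupp G Sᶜ c with hA
  have hmatch : (M.induce A).IsMatching := by
    intro v hv
    rw [Subgraph.induce_verts] at hv
    have hsup : v ∈ M.support := by
      have := h1 v hv
      simpa [exposed] using this
    obtain ⟨w, hw⟩ := (Subgraph.mem_support _).1 hsup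
    have hvverts : v ∈ M.verts := M.edge_vert hw
    obtain ⟨w', hw', huniq⟩ := hM hvverts
    have hwA : w' ∈ A := by
      have hGadj : G.Adj v w' := M.adj_sub hw'
      by_cases hS : w' ∈ S
      · exact absurd hw'.symm (h2 w' hS v hv)
      · exact adj_mem_compSupp hv hS hGadj
    refine ⟨w', ⟨hv, hwA, hw'⟩, ?_⟩
    rintro y ⟨_, _, hy⟩
    exact huniq y hy
  have heven : Even A.ncard := by
    haveI : Fintype ((M.induce A).verts) := Fintype.ofFinite _
    have h5 := hmatch.even_card
    have h6 : (M.induce A).verts.toFinset.card = A.ncard := by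
      rw [← Set.ncard_eq_toFinset_card']
      congr 1
    rwa [h6] at h5
  exact (Nat.not_even_iff_odd.2 hodd) heven

lemma lemA (M : Subgraph G) (hM : M.IsMatching) :
    {c : (G.induce Sᶜ).ConnectedComponent | Odd (compSupp G Sᶜ c).ncard}.ncard
      ≤ (exposed G M ∩ ⋃ c ∈ {c : (G.induce Sᶜ).ConnectedComponent |
          Odd (compSupp G Sᶜ c).ncard}, compSupp G Sᶜ c).ncard + S.ncard := by
  classical
  set Codd := {c : (G.induce Sᶜ).ConnectedComponent | Odd (compSupp G Sᶜ c).ncard} with hCodd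
  set DD := ⋃ c ∈ Codd, compSupp G Sᶜ c with hDD
  set C1 := {c ∈ Codd | (compSupp G Sᶜ c ∩ exposed G M).Nonempty} with hC1
  set C2 := Codd \ C1 with hC2
  have hsplit : Codd ⊆ C1 ∪ C2 := fun c hc => by
    by_cases h : c ∈ C1
    · exact Or.inl h
    · exact Or.inr ⟨hc, h⟩
  have hb1 : C1.ncard ≤ (exposed G M ∩ DD).ncard := by
    have hne : ∀ c ∈ C1, (compSupp G Sᶜ c ∩ exposed G M).Nonempty := fun c hc => hc.2
    refine Set.ncard_le_ncard_of_injOn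
      (fun c => if h : (compSupp G Sᶜ c ∩ exposed G M).Nonempty then h.choose
        else (compSupp_nonempty c).choose) (fun c hc => ?_) (fun c hc c' hc' heq => ?_)
      (Set.toFinite _)
    · simp only [dif_pos (hne c hc)]
      obtain ⟨h1, h2⟩ := (hne c hc).choose_spec
      exact ⟨h2, Set.mem_biUnion hc.1 h1⟩
    · simp only [dif_pos (hne c hc), dif_pos (hne c' hc')] at heq
      exact compSupp_eq_of_mem (hne c hc).choose_spec.1 (heq ▸ (hne c' hc').choose_spec.1)
  have hb2 : C2.ncard ≤ S.ncard := by
    have hmS : ∀ c ∈ C2, ∃ s ∈ S, ∃ w ∈ compSupp G Sᶜ c, M.Adj s w := by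
      intro c hc
      rcases odd_comp_dichotomy M hM c hc.1 with h | h
      · exact absurd ⟨hc.1, by obtain ⟨v, hv1, hv2⟩ := h; exact ⟨v, hv1, hv2⟩⟩ hc.2
      · exact h
    refine Set.ncard_le_ncard_of_injOn
      (fun c => if h : ∃ s ∈ S, ∃ w ∈ compSupp G Sᶜ c, M.Adj s w then h.choose
        else (compSupp_nonempty c).choose) (fun c hc => ?_) (fun c hc c' hc' heq => ?_)
      (Set.toFinite _)
    · simp only [dif_pos (hmS c hc)]
      exact (hmS c hc).choose_spec.1
    · simp only [dif_pos (hmS c hc), dif_pos (hmS c' hc')] at heq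
      obtain ⟨hs, w, hw, hadj⟩ := (hmS c hc).choose_spec
      obtain ⟨hs', w', hw', hadj'⟩ := (hmS c' hc').choose_spec
      rw [heq] at hadj
      obtain ⟨_, _, huniq⟩ := hM (M.edge_vert hadj')
      have : w = w' := by
        rw [huniq w hadj, huniq w' hadj']
      exact compSupp_eq_of_mem hw (this ▸ hw')
  calc Codd.ncard ≤ (C1 ∪ C2).ncard := Set.ncard_le_ncard hsplit (Set.toFinite _)
    _ ≤ C1.ncard + C2.ncard := Set.ncard_union_le _ _
    _ ≤ (exposed G M ∩ DD).ncard + S.ncard := Nat.add_le_add hb1 hb2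

lemma construction (hGE : GallaiEdmonds G S)
    (f : S → (G.induce Sᶜ).ConnectedComponent) (hfinj : Function.Injective f)
    (hfodd : ∀ s : S, Odd (compSupp G Sᶜ (f s)).ncard)
    (w : S → V) (hw : ∀ s : S, w s ∈ compSupp G Sᶜ (f s)) (hadj : ∀ s : S, G.Adj s (w s))
    (g : (G.induce Sᶜ).ConnectedComponent → V)
    (hg : ∀ c, Odd (compSupp G Sᶜ c).ncard → c ∉ Set.range f → g c ∈ compSupp G Sᶜ c) :
    ∃ M : Subgraph G, M.IsMatching ∧
      exposed G M = g '' {c | Odd (compSupp G Sᶜ c).ncard ∧ c ∉ Set.range f} := by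
  classical
  set Cbad := {c : (G.induce Sᶜ).ConnectedComponent |
    Odd (compSupp G Sᶜ c).ncard ∧ c ∉ Set.range f} with hCbad
  set X : Set V := Set.range w ∪ g '' Cbad with hX
  have hwS : ∀ t : S, (w t) ∈ Sᶜ := fun t => compSupp_subset _ (hw t)
  have hXsub : ∀ x ∈ X, ∃ c', x ∈ compSupp G Sᶜ c' ∧
      ((∃ s : S, f s = c' ∧ x = w s) ∨ (c' ∈ Cbad ∧ x = g c')) := by
    rintro x (⟨s, rfl⟩ | ⟨c', hc', rfl⟩)
    · exact ⟨f s, hw s, Or.inl ⟨s, rfl, rfl⟩⟩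
    · exact ⟨c', hg c' hc'.1 hc'.2, Or.inr ⟨hc', rfl⟩⟩
  have hinter : ∀ c : (G.induce Sᶜ).ConnectedComponent,
      (∀ s : S, f s ≠ c) → c ∉ Cbad → compSupp G Sᶜ c ∩ X = ∅ := by
    intro c hc1 hc2
    ext x
    simp only [Set.mem_inter_iff, Set.mem_empty_iff_false, iff_false, not_and]
    intro hxc hxX
    obtain ⟨c', hxc', hcase⟩ := hXsub x hxX
    have hcc' : c = c' := compSupp_eq_of_mem hxc hxc'
    rcases hcase with ⟨s, hfs, _⟩ | ⟨hc', _⟩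
    · exact hc1 s (hfs.trans hcc'.symm)
    · exact hc2 (hcc' ▸ hc')
  have hinter2 : ∀ s : S, compSupp G Sᶜ (f s) ∩ X = {w s} := by
    intro s
    ext x
    simp only [Set.mem_inter_iff, Set.mem_singleton_iff]
    constructor
    · rintro ⟨hxc, hxX⟩
      obtain ⟨c', hxc', hcase⟩ := hXsub x hxX
      have hcc' : f s = c' := compSupp_eq_of_mem hxc hxc'
      rcases hcase with ⟨s', hfs', rfl⟩ | ⟨hc', rfl⟩
      · have : s' = s := hfinj (hfs'.trans hcc'.symm)
        rw [this]
      · exact absurd ⟨s, hcc'⟩ hc'.2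
    · rintro rfl
      exact ⟨hw s, Or.inl ⟨s, rfl⟩⟩
  have hinter3 : ∀ c ∈ Cbad, compSupp G Sᶜ c ∩ X = {g c} := by
    intro c hc
    ext x
    simp only [Set.mem_inter_iff, Set.mem_singleton_iff]
    constructor
    · rintro ⟨hxc, hxX⟩
      obtain ⟨c', hxc', hcase⟩ := hXsub x hxX
      have hcc' : c = c' := compSupp_eq_of_mem hxc hxc'
      rcases hcase with ⟨s', hfs', rfl⟩ | ⟨hc', rfl⟩
      · exact absurd ⟨s', hfs'.trans hcc'.symm⟩ hc.2
      · rw [hcc']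
    · rintro rfl
      exact ⟨hg c hc.1 hc.2, Or.inr ⟨c, hc, rfl⟩⟩
  have hcomp : ∀ c : (G.induce Sᶜ).ConnectedComponent,
      ∃ N : Subgraph G, N.IsMatching ∧ N.verts = compSupp G Sᶜ c \ X := by
    intro c
    by_cases hodd : Odd (compSupp G Sᶜ c).ncard
    · by_cases hr : ∃ s : S, f s = c
      · obtain ⟨s, rfl⟩ := hr
        obtain ⟨N, hN1, hN2⟩ := hasPM_subgraph (hGE.2.1 _ hodd (w s) (hw s))
        refine ⟨N, hN1, ?_⟩
        rw [hN2]
        rw [show compSupp G Sᶜ (f s) \ X = compSupp G Sᶜ (f s) \ {w s} by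
          rw [← hinter2 s, Set.diff_self_inter]]
      · have hcb : c ∈ Cbad := ⟨hodd, fun ⟨s, hs⟩ => hr ⟨s, hs⟩⟩
        obtain ⟨N, hN1, hN2⟩ := hasPM_subgraph (hGE.2.1 _ hodd (g c) (hg c hodd hcb.2))
        refine ⟨N, hN1, ?_⟩
        rw [hN2]
        rw [show compSupp G Sᶜ c \ X = compSupp G Sᶜ c \ {g c} by
          rw [← hinter3 c hcb, Set.diff_self_inter]]
    · obtain ⟨N, hN1, hN2⟩ := hasPM_subgraph (hGE.1 c (Nat.not_odd_iff_even.1 hodd))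
      refine ⟨N, hN1, ?_⟩
      rw [hN2]
      have hemp := hinter c (fun s hs => hodd (hs ▸ hfodd s)) (fun hc => hodd hc.1)
      ext x
      simp only [Set.mem_diff]
      refine ⟨fun hx => ⟨hx, fun hxX => ?_⟩, fun hx => hx.1⟩
      exact absurd (show x ∈ compSupp G Sᶜ c ∩ X from ⟨hx, hxX⟩) (by rw [hemp]; exact fun h => h)
  choose N hN1 hN2 using hcomp
  set M0 : Subgraph G := ⨆ s : S, G.subgraphOfAdj (hadj s) with hM0
  have hM0verts : M0.verts = ⋃ s : S, {(s : V), w s} := by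
    rw [hM0, Subgraph.verts_iSup]
    simp
  have hsadjdisj : Pairwise fun s s' : S =>
      Disjoint (G.subgraphOfAdj (hadj s)).support (G.subgraphOfAdj (hadj s')).support := by
    intro s s' hss
    rw [(Subgraph.IsMatching.subgraphOfAdj (hadj s)).support_eq_verts,
      (Subgraph.IsMatching.subgraphOfAdj (hadj s')).support_eq_verts]
    simp only [subgraphOfAdj_verts]
    rw [Set.disjoint_left]
    intro x hx hx'
    simp only [Set.mem_insert_iff, Set.mem_singleton_iff] at hx hx'
    rcases hx with rfl | rfl <;> rcases hx' with h | h
    · exact hss (Subtype.val_injective h)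
    · exact absurd (h ▸ s.2) (hwS s')
    · exact absurd (h.symm ▸ s'.2 : w s ∈ S) (hwS s)
    · exact (compSupp_disjoint (fun hff => hss (hfinj hff))).ne_of_mem (hw s) (hw s') h
  have hM0match : M0.IsMatching :=
    Subgraph.IsMatching.iSup (fun s => Subgraph.IsMatching.subgraphOfAdj _) hsadjdisj
  have hNdisj : Pairwise fun c c' => Disjoint (N c).support (N c').support := by
    intro c c' hcc
    rw [(hN1 c).support_eq_verts, (hN1 c').support_eq_verts, hN2, hN2]
    exact (compSupp_disjoint hcc).mono Set.diff_subset Set.diff_subset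
  have hNmatch : (⨆ c, N c).IsMatching := Subgraph.IsMatching.iSup hN1 hNdisj
  have hNverts : (⨆ c, N c).verts = ⋃ c, (compSupp G Sᶜ c \ X) := by
    rw [Subgraph.verts_iSup]
    exact Set.iUnion_congr hN2
  have hdisj : Disjoint M0.support (⨆ c, N c).support := by
    rw [hM0match.support_eq_verts, hNmatch.support_eq_verts, hM0verts, hNverts,
      Set.disjoint_left]
    intro x hx hx'
    simp only [Set.mem_iUnion, Set.mem_insert_iff, Set.mem_singleton_iff] at hx hx'
    obtain ⟨c, hc1, hc2⟩ := hx'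
    rcases hx with ⟨s, rfl | rfl⟩
    · exact (compSupp_subset c hc1) s.2
    · exact hc2 (Or.inl ⟨s, rfl⟩)
  set M : Subgraph G := M0 ⊔ ⨆ c, N c with hMdef
  have hMmatch : M.IsMatching := hM0match.sup hNmatch hdisj
  refine ⟨M, hMmatch, ?_⟩
  have hMverts : M.verts = M0.verts ∪ ⋃ c, (compSupp G Sᶜ c \ X) := by
    rw [hMdef, Subgraph.verts_sup, hNverts]
  rw [exposed_eq_compl_verts M hMmatch]
  ext x
  simp only [Set.mem_compl_iff, hMverts, Set.mem_union, not_or]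
  constructor
  · rintro ⟨hx0, hxN⟩
    by_cases hxS : x ∈ S
    · exact absurd (hM0verts ▸ Set.mem_iUnion.2 ⟨⟨x, hxS⟩, Or.inl rfl⟩) hx0
    · obtain ⟨c, hxc⟩ := exists_compSupp_mem (G := G) (hxS : x ∈ Sᶜ)
      have hxX : x ∈ X := by
        by_contra hxX
        exact hxN (Set.mem_iUnion.2 ⟨c, hxc, hxX⟩)
      obtain ⟨c', hxc', hcase⟩ := hXsub x hxX
      rcases hcase with ⟨s, hfs, rfl⟩ | ⟨hc', rfl⟩
      · exact absurd (hM0verts ▸ Set.mem_iUnion.2 ⟨s, Or.inr rfl⟩) hx0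
      · exact ⟨c', hc', rfl⟩
  · rintro ⟨c, hc, rfl⟩
    constructor
    · rw [hM0verts]
      rintro hmem
      simp only [Set.mem_iUnion, Set.mem_insert_iff, Set.mem_singleton_iff] at hmem
      obtain ⟨s, heq | heq⟩ := hmem
      · exact (compSupp_subset c (heq ▸ hg c hc.1 hc.2 : (s : V) ∈ compSupp G Sᶜ c)) s.2
      · exact (compSupp_disjoint (fun hfc => hc.2 ⟨s, hfc⟩)).ne_of_mem
          (hw s) (hg c hc.1 hc.2) heq.symm
    · intro hmem
      simp only [Set.mem_iUnion] at hmem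
      obtain ⟨c', hc'1, hc'2⟩ := hmem
      exact hc'2 (Or.inr ⟨c, hc, rfl⟩)

lemma count_bad (f : S → (G.induce Sᶜ).ConnectedComponent) (hfinj : Function.Injective f)
    (hfodd : ∀ s : S, Odd (compSupp G Sᶜ (f s)).ncard)
    (g : (G.induce Sᶜ).ConnectedComponent → V)
    (hg : ∀ c ∈ {c | Odd (compSupp G Sᶜ c).ncard ∧ c ∉ Set.range f}, g c ∈ compSupp G Sᶜ c) :
    (g '' {c | Odd (compSupp G Sᶜ c).ncard ∧ c ∉ Set.range f}).ncard + S.ncard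
      = {c : (G.induce Sᶜ).ConnectedComponent | Odd (compSupp G Sᶜ c).ncard}.ncard := by
  classical
  set Codd := {c : (G.induce Sᶜ).ConnectedComponent | Odd (compSupp G Sᶜ c).ncard} with hCodd
  set Cbad := {c | Odd (compSupp G Sᶜ c).ncard ∧ c ∉ Set.range f} with hCbadd
  have hinj : Set.InjOn g Cbad := by
    intro c hc c' hc' heq
    exact compSupp_eq_of_mem (hg c hc) (heq ▸ hg c' hc')
  rw [Set.ncard_image_of_injOn hinj]
  have hCbadeq : Cbad = Codd \ Set.range f := by
    ext c
    simp only [hCbadd, hCodd, Set.mem_setOf_eq, Set.mem_diff]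
  have hrange : Set.range f ⊆ Codd := by rintro _ ⟨s, rfl⟩; exact hfodd s
  have hrc : (Set.range f).ncard = S.ncard := by
    rw [← Set.image_univ, Set.ncard_image_of_injective _ hfinj, Set.ncard_univ,
      Nat.card_coe_set_eq]
  rw [hCbadeq, ← hrc]
  exact Set.ncard_diff_add_ncard_of_subset hrange (Set.toFinite _)

lemma exists_hall (hGE : GallaiEdmonds G S)
    (E : Set ((G.induce Sᶜ).ConnectedComponent)) (hE : E.ncard ≤ 1) :
    ∃ f : S → (G.induce Sᶜ).ConnectedComponent, Function.Injective f ∧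
      ∀ s : S, f s ∉ E ∧ Odd (compSupp G Sᶜ (f s)).ncard ∧
        ∃ x ∈ compSupp G Sᶜ (f s), G.Adj s x := by
  classical
  set t : S → Finset ((G.induce Sᶜ).ConnectedComponent) := fun s =>
    (Set.toFinite ({c | Odd (compSupp G Sᶜ c).ncard ∧
      ∃ x ∈ compSupp G Sᶜ c, G.Adj s x} \ E)).toFinset with ht
  have hHall : ∀ F : Finset S, F.card ≤ (F.biUnion t).card := by
    intro F
    rcases F.eq_empty_or_nonempty with rfl | hFne
    · simp
    set T : Set V := Subtype.val '' (F : Set S) with hT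
    have hTS : T ⊆ S := by rintro _ ⟨⟨x, hx⟩, _, rfl⟩; exact hx
    have hTne : T.Nonempty := (hFne.to_set.image _)
    have hTcard : T.ncard = F.card := by
      rw [hT, Set.ncard_image_of_injective _ Subtype.val_injective, Set.ncard_coe_finset]
    have hmain := hGE.2.2 T hTS hTne
    have hsub : minorNbhd G S T ⊆ (↑(F.biUnion t) : Set _) ∪ E := by
      rintro c ⟨hodd, u, hu, x, hx, hadj⟩
      obtain ⟨s, hsF, rfl⟩ := hu
      by_cases hcE : c ∈ E
      · exact Or.inr hcE
      · refine Or.inl ?_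
        rw [Finset.coe_biUnion]
        refine Set.mem_biUnion hsF ?_
        rw [ht]
        simp only [Set.Finite.coe_toFinset, Set.mem_diff, Set.mem_setOf_eq]
        exact ⟨⟨hodd, x, hx, hadj⟩, hcE⟩
    have hle : (minorNbhd G S T).ncard ≤ (F.biUnion t).card + E.ncard := by
      calc (minorNbhd G S T).ncard ≤ ((↑(F.biUnion t) : Set _) ∪ E).ncard :=
            Set.ncard_le_ncard hsub (Set.toFinite _)
        _ ≤ (↑(F.biUnion t) : Set ((G.induce Sᶜ).ConnectedComponent)).ncard + E.ncard :=
            Set.ncard_union_le _ _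
        _ = (F.biUnion t).card + E.ncard := by rw [Set.ncard_coe_finset]
    omega
  obtain ⟨f, hfinj, hf⟩ := (Finset.all_card_le_biUnion_card_iff_exists_injective t).1 hHall
  refine ⟨f, hfinj, fun s => ?_⟩
  have := hf s
  rw [ht] at this
  simp only [Set.Finite.mem_toFinset, Set.mem_diff, Set.mem_setOf_eq] at this
  exact ⟨this.2, this.1.1, this.1.2⟩

end Helpers

/-- For a Gallai-Edmonds set `S`, the union of the odd `S`-components is
`D(G)`, the set of vertices exposed by some maximum matching. -/
theorem stmt_10 (G : SimpleGraph V) (S : Set V) (h : GallaiEdmonds G S) :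
    {v : V | ∃ A : Set V, IsCompOf G Sᶜ A ∧ Odd A.ncard ∧ v ∈ A} =
      {v : V | ∃ M : Subgraph G, IsMaximumMatching G M ∧ v ∈ exposed G M} := by
  classical
  set Codd := {c : (G.induce Sᶜ).ConnectedComponent | Odd (compSupp G Sᶜ c).ncard} with hCodd
  set DD := ⋃ c ∈ Codd, compSupp G Sᶜ c with hDD
  have hDeq : {v : V | ∃ A : Set V, IsCompOf G Sᶜ A ∧ Odd A.ncard ∧ v ∈ A} = DD := by
    ext v
    simp only [Set.mem_setOf_eq, hDD, Set.mem_iUnion]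
    constructor
    · rintro ⟨A, ⟨c, rfl⟩, hodd, hv⟩
      exact ⟨c, hodd, hv⟩
    · rintro ⟨c, hodd, hv⟩
      exact ⟨compSupp G Sᶜ c, ⟨c, rfl⟩, hodd, hv⟩
  rw [hDeq]
  ext v
  simp only [Set.mem_setOf_eq]
  constructor
  · intro hv
    obtain ⟨c₀, hc₀odd, hvc₀⟩ : ∃ c ∈ Codd, v ∈ compSupp G Sᶜ c := by
      simpa [hDD, Set.mem_iUnion] using hv
    obtain ⟨f, hfinj, hf⟩ := exists_hall h ({c₀} : Set _) (by simp)
    choose wv hwv hadjv using fun s => (hf s).2.2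
    set g : (G.induce Sᶜ).ConnectedComponent → V :=
      fun c => if c = c₀ then v else (compSupp_nonempty c).choose with hgdef
    have hg : ∀ c, Odd (compSupp G Sᶜ c).ncard → c ∉ Set.range f → g c ∈ compSupp G Sᶜ c := by
      intro c _ _
      by_cases hcc : c = c₀
      · subst hcc; simp only [hgdef, if_pos rfl]; exact hvc₀
      · simp only [hgdef, if_neg hcc]; exact (compSupp_nonempty c).choose_spec
    obtain ⟨M, hMm, hMexp⟩ := construction h f hfinj (fun s => (hf s).2.1) wv hwv hadjv g hg
    refine ⟨M, ⟨hMm, ?_⟩, ?_⟩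
    · intro M' hM'
      have l1 : Codd.ncard ≤ (exposed G M' ∩ DD).ncard + S.ncard := lemA M' hM'
      have l2 : (g '' {c | Odd (compSupp G Sᶜ c).ncard ∧ c ∉ Set.range f}).ncard + S.ncard
          = Codd.ncard := count_bad f hfinj (fun s => (hf s).2.1) g (fun c hc => hg c hc.1 hc.2)
      have l3 := exposed_ncard_add M hMm
      have l4 := exposed_ncard_add M' hM'
      have l5 : (exposed G M' ∩ DD).ncard ≤ (exposed G M').ncard :=
        Set.ncard_le_ncard Set.inter_subset_left (Set.toFinite _)
      rw [hMexp] at l3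
      omega
    · rw [hMexp]
      refine ⟨c₀, ⟨hc₀odd, fun hr => ?_⟩, by simp [hgdef]⟩
      obtain ⟨s, hs⟩ := hr
      exact (hf s).1 (by rw [hs]; exact rfl)
  · rintro ⟨M, ⟨hMm, hMmax⟩, hvexp⟩
    by_contra hvD
    obtain ⟨f, hfinj, hf⟩ := exists_hall h (∅ : Set _) (by simp)
    choose wv hwv hadjv using fun s => (hf s).2.2
    set g : (G.induce Sᶜ).ConnectedComponent → V :=
      fun c => (compSupp_nonempty c).choose with hgdef
    have hg : ∀ c, Odd (compSupp G Sᶜ c).ncard → c ∉ Set.range f → g c ∈ compSupp G Sᶜ c :=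
      fun c _ _ => (compSupp_nonempty c).choose_spec
    obtain ⟨M₁, hM1m, hM1exp⟩ := construction h f hfinj (fun s => (hf s).2.1) wv hwv hadjv g hg
    have l1 : Codd.ncard ≤ (exposed G M ∩ DD).ncard + S.ncard := lemA M hMm
    have l2 : (g '' {c | Odd (compSupp G Sᶜ c).ncard ∧ c ∉ Set.range f}).ncard + S.ncard
        = Codd.ncard := count_bad f hfinj (fun s => (hf s).2.1) g (fun c hc => hg c hc.1 hc.2)
    have l3 := exposed_ncard_add M hMm
    have l4 := exposed_ncard_add M₁ hM1m
    have l5 := hMmax M₁ hM1m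
    have l6 : (exposed G M ∩ DD).ncard < (exposed G M).ncard := by
      refine Set.ncard_lt_ncard ?_ (Set.toFinite _)
      refine ⟨Set.inter_subset_left, fun hsub => ?_⟩
      exact hvD (hsub hvexp).2
    rw [hM1exp] at l4
    omega
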